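/- arXiv:1805.00535 — 5 statements merged into one kernel-verified Lean document; each statement's English description precedes it below -/
import Mathlib

section
/- Let n ≡ 1 (mod 6) and let α, β : Z_n → Z_n be defined by α(x) = -2x and β(x) = -2x + 3. Then for any x ∈ Z_n there is a finite composition of the maps α and β sending x to x + 1. -/
/-- For `n ≡ 1 (mod 6)`, some finite composition of `α(x) = -2x` and
`β(x) = -2x + 3` sends `x` to `x + 1` in `ZMod n`. -/
theorem comp_alpha_beta_succ (n : ℕ) (hn : n % 6 = 1)
    (α β : ZMod n → ZMod n)
    (hα : α = fun x => -2 * x) (hβ : β = fun x => -2 * x + 3)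
    (x : ZMod n) :
    ∃ L : List (ZMod n → ZMod n), (∀ f ∈ L, f = α ∨ f = β) ∧
      L.foldl (fun z f => f z) x = x + 1 := by
  have hn1 : n ≠ 0 := by omega
  haveI : NeZero n := ⟨hn1⟩
  -- 2 and 3 are units mod n
  have cop2 : Nat.Coprime 2 n := (Nat.prime_two.coprime_iff_not_dvd).mpr (by omega)
  have cop3 : Nat.Coprime 3 n := (Nat.prime_three.coprime_iff_not_dvd).mpr (by omega)
  have h2 : IsUnit (2 : ZMod n) := by
    have := (ZMod.isUnit_iff_coprime 2 n).mpr cop2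
    push_cast at this; exact this
  have h3 : IsUnit (3 : ZMod n) := by
    have := (ZMod.isUnit_iff_coprime 3 n).mpr cop3
    push_cast at this; exact this
  have hm2 : IsUnit (-2 : ZMod n) := h2.neg
  obtain ⟨u, hu⟩ := hm2
  set k := orderOf u with hkdef
  have hk : 0 < k := orderOf_pos u
  have hpow : (-2 : ZMod n) ^ k = 1 := by
    have := pow_orderOf_eq_one u
    have h' : ((u ^ k : (ZMod n)ˣ) : ZMod n) = ((1 : (ZMod n)ˣ) : ZMod n) := by
      rw [this]
    rwa [Units.val_pow_eq_pow_val, hu, Units.val_one] at h'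
  set step : ZMod n → (ZMod n → ZMod n) → ZMod n := fun z f => f z with hstep
  have hrep : ∀ j z, (List.replicate j α).foldl step z = (-2) ^ j * z := by
    intro j
    induction j with
    | zero => intro z; simp
    | succ j ih =>
      intro z
      rw [List.replicate_succ, List.foldl_cons, ih]
      simp only [hstep, hα]
      rw [pow_succ]
      ring
  set block : List (ZMod n → ZMod n) := List.replicate (k - 1) α ++ [β] with hblockdef
  have hblock : ∀ z, block.foldl step z = z + 3 := by
    intro z
    rw [hblockdef, List.foldl_append, hrep, List.foldl_cons, List.foldl_nil]
    simp only [hstep, hβ]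
    have hk1 : k - 1 + 1 = k := Nat.succ_pred_eq_of_pos hk
    calc -2 * ((-2) ^ (k - 1) * z) + 3 = (-2) ^ (k - 1 + 1) * z + 3 := by
          rw [pow_succ]; ring
      _ = z + 3 := by rw [hk1, hpow, one_mul]
  have hjoin : ∀ (N : ℕ) (z : ZMod n),
      ((List.replicate N block).flatten).foldl step z = z + 3 * (N : ZMod n) := by
    intro N
    induction N with
    | zero => intro z; simp
    | succ N ih =>
      intro z
      rw [List.replicate_succ, List.flatten_cons, List.foldl_append, hblock, ih]
      push_cast
      ring
  set N : ℕ := ((3 : ZMod n)⁻¹).val with hNdef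
  have hNcast : ((N : ℕ) : ZMod n) = (3 : ZMod n)⁻¹ := by
    rw [hNdef, ZMod.natCast_val, ZMod.cast_id]
  refine ⟨(List.replicate N block).flatten, ?_, ?_⟩
  · intro f hf
    simp only [List.mem_flatten, List.mem_replicate] at hf
    obtain ⟨l, ⟨-, rfl⟩, hfl⟩ := hf
    rw [hblockdef] at hfl
    simp only [List.mem_append, List.mem_replicate, List.mem_singleton] at hfl
    rcases hfl with ⟨-, rfl⟩ | rfl
    · exact Or.inl rfl
    · exact Or.inr rfl
  · rw [hjoin, hNcast, ZMod.mul_inv_of_unit 3 h3]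
end

section
/- Let n ≡ 5 (mod 6) and let α, β : Z_n → Z_n be defined by α(x) = -2x and β(x) = -2x + 3. Then for any x, y ∈ Z_n there is a finite composition of the maps α and β sending x to y. -/
/-- For `n ≡ 5 (mod 6)`, some finite composition of `α(x) = -2x` and
`β(x) = -2x + 3` sends any `x` to any `y` in `ZMod n`. -/
theorem comp_alpha_beta_any (n : ℕ) (hn : n % 6 = 5)
    (α β : ZMod n → ZMod n)
    (hα : α = fun x => -2 * x) (hβ : β = fun x => -2 * x + 3)
    (x y : ZMod n) :
    ∃ L : List (ZMod n → ZMod n), (∀ f ∈ L, f = α ∨ f = β) ∧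
      L.foldl (fun z f => f z) x = y := by
  have hn0 : n ≠ 0 := by omega
  haveI : NeZero n := ⟨hn0⟩
  have hn2 : n % 2 = 1 := by omega
  have hn3 : n % 3 = 2 := by omega
  -- -2 is a unit
  have h2 : IsUnit (2 : ZMod n) := by
    have : IsUnit ((2 : ℕ) : ZMod n) := by
      rw [ZMod.isUnit_iff_coprime]
      have : ¬ (2 ∣ n) := by omega
      exact (Nat.prime_two.coprime_iff_not_dvd).mpr this
    simpa using this
  have hu : IsUnit (-2 : ZMod n) := h2.neg
  -- 3 is a unit
  have h3 : IsUnit (3 : ZMod n) := by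
    have : IsUnit ((3 : ℕ) : ZMod n) := by
      rw [ZMod.isUnit_iff_coprime]
      have : ¬ (3 ∣ n) := by omega
      exact (Nat.prime_three.coprime_iff_not_dvd).mpr this
    simpa using this
  set d := orderOf hu.unit with hd
  have hd1 : 1 ≤ d := orderOf_pos hu.unit
  have hpow : (-2 : ZMod n) ^ d = 1 := by
    have := pow_orderOf_eq_one hu.unit
    have h' : ((hu.unit ^ d : (ZMod n)ˣ) : ZMod n) = 1 := by rw [this]; rfl
    rwa [Units.val_pow_eq_pow_val, IsUnit.unit_spec] at h'
  -- folding replicated α's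
  have foldα : ∀ (k : ℕ) (z : ZMod n),
      (List.replicate k α).foldl (fun z f => f z) z = (-2) ^ k * z := by
    intro k
    induction k with
    | zero => intro z; simp
    | succ k ih =>
      intro z
      rw [List.replicate_succ, List.foldl_cons, ih, hα]
      ring
  -- the basic block: translation by 3
  set L0 : List (ZMod n → ZMod n) := List.replicate (d - 1) α ++ [β] with hL0
  have foldL0 : ∀ z : ZMod n, L0.foldl (fun z f => f z) z = z + 3 := by
    intro z
    rw [hL0, List.foldl_append, foldα, List.foldl_cons, List.foldl_nil, hβ]
    simp only
    have : (-2 : ZMod n) * ((-2) ^ (d - 1) * z) = (-2) ^ d * z := by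
      rw [← mul_assoc, ← pow_succ']
      congr 2
      omega
    rw [this, hpow, one_mul]
  -- iterate m times
  have foldIter : ∀ (m : ℕ) (z : ZMod n),
      ((List.replicate m L0).flatten).foldl (fun z f => f z) z = z + 3 * m := by
    intro m
    induction m with
    | zero => intro z; simp
    | succ m ih =>
      intro z
      rw [List.replicate_succ, List.flatten_cons, List.foldl_append, foldL0, ih]
      push_cast
      ring
  set m := ((y - x) * (3 : ZMod n)⁻¹).val with hm
  refine ⟨(List.replicate m L0).flatten, ?_, ?_⟩
  · intro f hf
    simp only [List.mem_flatten, List.mem_replicate] at hf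
    obtain ⟨l, ⟨-, rfl⟩, hfl⟩ := hf
    rw [hL0] at hfl
    rcases List.mem_append.mp hfl with h | h
    · exact Or.inl (List.eq_of_mem_replicate h)
    · simp at h; exact Or.inr h
  · rw [foldIter, hm, ZMod.natCast_val, ZMod.cast_id,
      show (3 : ZMod n) * ((y - x) * 3⁻¹) = (3 * 3⁻¹) * (y - x) by ring,
      ZMod.mul_inv_of_unit _ h3, one_mul]
    ring
end

section
/- Let n ≡ 1 or 5 (mod 6) and g ∈ Z_n. Let D'_g be the directed graph on vertex set Z_n with an arc from i+g to -2i+g for each i ∈ Z_n. Then the directed graph D'_g ∪ D'_{g+1} is strongly connected. -/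
/-!
Shift coordinates by `g`: writing `a = x + g`, the arcs of `D'_g` become `x ↦ -2x` and those
of `D'_{g+1}` become `x ↦ -2x + 3`. Since `gcd(n, 6) = 1`, `-2` is a unit of finite order `k`,
so `k - 1` arcs of the first kind followed by one of the second lead from `x` to `x + 3`.
Iterating, `x` reaches `x + 3m` for every `m`, which is every vertex because `3` is a unit.
-/

open Relation

theorem reflTransGen_mul_pow {M : Type*} [Monoid M] {r : M → M → Prop} {c : M}
    (h₀ : ∀ x, r x (c * x)) (x : M) (k : ℕ) :
    ReflTransGen r x (c ^ k * x) := by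
  induction k with
  | zero => simpa using ReflTransGen.refl
  | succ k ih => simpa [pow_succ', mul_assoc] using ih.tail (h₀ _)

theorem reflTransGen_add_of_isOfFinOrder {R : Type*} [Semiring R] {r : R → R → Prop} {c d : R}
    (h₀ : ∀ x, r x (c * x)) (h₁ : ∀ x, r x (c * x + d))
    (hc : IsOfFinOrder c) (x : R) : ReflTransGen r x (x + d) := by
  obtain ⟨k, hk⟩ := Nat.exists_eq_add_one_of_ne_zero hc.orderOf_pos.ne'
  have hck : c * c ^ k = 1 := by rw [← pow_succ', ← hk, pow_orderOf_eq_one]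
  simpa [← mul_assoc, hck] using (reflTransGen_mul_pow h₀ x k).tail (h₁ _)

theorem reflTransGen_add_nsmul {M : Type*} [AddMonoid M] {r : M → M → Prop} {d : M}
    (h : ∀ x, ReflTransGen r x (x + d)) (x : M) (m : ℕ) : ReflTransGen r x (x + m • d) := by
  induction m with
  | zero => simpa using ReflTransGen.refl
  | succ m ih => simpa [succ_nsmul, add_assoc] using ih.trans (h _)

theorem ZMod.exists_nsmul_eq_of_isUnit {n : ℕ} [NeZero n] {d : ZMod n} (hd : IsUnit d)
    (y : ZMod n) : ∃ m : ℕ, m • d = y := by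
  obtain ⟨m, hm⟩ := ZMod.natCast_zmod_surjective (y * ((hd.unit⁻¹ : (ZMod n)ˣ) : ZMod n))
  refine ⟨m, ?_⟩
  rw [nsmul_eq_mul, hm, mul_assoc, IsUnit.val_inv_mul, mul_one]

/-- For `n ≡ 1` or `5 (mod 6)` and `g ∈ ZMod n`, the union of the directed
graphs `D'_g` and `D'_{g+1}` (arcs `i+g → -2i+g` for each `i`) is strongly
connected. -/
theorem digraph_union_strongly_connected (n : ℕ)
    (hn : n % 6 = 1 ∨ n % 6 = 5) (g : ZMod n) :
    ∀ u v : ZMod n,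
      Relation.ReflTransGen
        (fun a b =>
          (∃ i : ZMod n, a = i + g ∧ b = -2 * i + g) ∨
          (∃ i : ZMod n, a = i + (g + 1) ∧ b = -2 * i + (g + 1)))
        u v := by
  intro u v
  set D : ZMod n → ZMod n → Prop := fun a b =>
    (∃ i : ZMod n, a = i + g ∧ b = -2 * i + g) ∨
    (∃ i : ZMod n, a = i + (g + 1) ∧ b = -2 * i + (g + 1))
  have : NeZero n := ⟨by omega⟩
  have h2 : IsUnit (2 : ZMod n) := by
    exact_mod_cast (ZMod.isUnit_prime_iff_not_dvd Nat.prime_two).2 (by omega)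
  have h3 : IsUnit (3 : ZMod n) := by
    exact_mod_cast (ZMod.isUnit_prime_iff_not_dvd Nat.prime_three).2 (by omega)
  have step : ∀ x, ReflTransGen (fun x y => D (x + g) (y + g)) x (x + 3) :=
    reflTransGen_add_of_isOfFinOrder (c := -2)
    (fun x => .inl ⟨x, rfl, rfl⟩) (fun x => .inr ⟨x - 1, by ring, by ring⟩)
    (isOfFinOrder_iff_isUnit.2 h2.neg)
  obtain ⟨m, hm⟩ := ZMod.exists_nsmul_eq_of_isUnit h3 (v - u)
  simpa [Function.onFun, hm] using
    ReflTransGen.lift (p := D) (· + g) (fun _ _ h => h) _ _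
      (reflTransGen_add_nsmul step (u - g) m)
end

section
/- Let T be a tree and M a Hamiltonian graph with n vertices. If the maximum degree of T satisfies Δ(T) < n, then the Cartesian product T □ M is Hamiltonian. -/
set_option linter.unusedSectionVars false
set_option maxHeartbeats 1000000
open List

namespace BPaux


variable {α β : Type*} [DecidableEq α] [DecidableEq β]

/-- consecutive pairs of a list -/
def pairs (l : List α) : List (α × α) := l.zip l.tail

@[simp] lemma pairs_nil : pairs ([] : List α) = [] := rfl
@[simp] lemma pairs_singleton (a : α) : pairs [a] = [] := rfl
@[simp] lemma pairs_cons₂ (a b : α) (t : List α) :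
    pairs (a :: b :: t) = (a, b) :: pairs (b :: t) := rfl

lemma pairs_cons (a : α) (l : List α) (h : l ≠ []) :
    pairs (a :: l) = (a, l.head h) :: pairs l := by
  cases l with
  | nil => simp at h
  | cons b t => rfl

@[simp] lemma length_pairs (l : List α) : (pairs l).length = l.length - 1 := by
  cases l with
  | nil => rfl
  | cons a t => simp [pairs]

lemma pairs_append (A B : List α) (hA : A ≠ []) (hB : B ≠ []) :
    pairs (A ++ B) = pairs A ++ (A.getLast hA, B.head hB) :: pairs B := by
  induction A with
  | nil => simp at hA
  | cons a t ih =>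
    cases t with
    | nil =>
      cases B with
      | nil => simp at hB
      | cons b s => simp [pairs_cons]
    | cons a' t' =>
      have : (a :: a' :: t') ++ B = a :: ((a' :: t') ++ B) := rfl
      rw [this, pairs_cons _ _ (by simp), ih (by simp)]
      simp [pairs_cons]

lemma chain'_iff_pairs {R : α → α → Prop} {l : List α} :
    Chain' R l ↔ ∀ p ∈ pairs l, R p.1 p.2 := by
  induction l with
  | nil => simp; exact List.isChain_nil
  | cons a t ih =>
    cases t with
    | nil => simp; exact List.isChain_singleton _
    | cons b s =>
      rw [show Chain' R (a :: b :: s) ↔ R a b ∧ Chain' R (b :: s) from List.isChain_cons_cons, pairs_cons₂, ih]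
      simp

lemma eq_append_of_mem_pairs {l : List α} {p : α × α} (h : p ∈ pairs l) :
    ∃ A B, l = A ++ p.1 :: p.2 :: B := by
  induction l with
  | nil => simp [pairs] at h
  | cons a t ih =>
    cases t with
    | nil => simp at h
    | cons b s =>
      rw [pairs_cons₂, mem_cons] at h
      rcases h with h | h
      · exact ⟨[], s, by simp [h]⟩
      · obtain ⟨A, B, hAB⟩ := ih h
        exact ⟨a :: A, B, by simp [hAB]⟩

lemma pairs_map (f : α → β) (l : List α) :
    pairs (l.map f) = (pairs l).map (Prod.map f f) := by
  cases l with
  | nil => rfl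
  | cons a t =>
    show (f a :: t.map f).zip (t.map f) = _
    rw [show (f a :: t.map f) = (a :: t).map f from rfl, List.zip_map]
    rfl

lemma pairs_reverse (l : List α) :
    pairs l.reverse = ((pairs l).map Prod.swap).reverse := by
  induction l with
  | nil => rfl
  | cons a t ih =>
    cases t with
    | nil => rfl
    | cons b s =>
      have h1 : (a :: b :: s).reverse = (b :: s).reverse ++ [a] := by simp
      rw [h1, pairs_append _ _ (by simp) (by simp), ih]
      simp

/-- all cyclically-consecutive pairs of a list -/
def cyclicPairs : List α → List (α × α)
  | [] => []
  | a :: t => pairs (a :: t) ++ [((a :: t).getLast (by simp), a)]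

@[simp] lemma cyclicPairs_nil : cyclicPairs ([] : List α) = [] := rfl

lemma cyclicPairs_eq (l : List α) (h : l ≠ []) :
    cyclicPairs l = pairs l ++ [(l.getLast h, l.head h)] := by
  cases l with
  | nil => simp at h
  | cons a t => rfl

lemma length_cyclicPairs (l : List α) (h : l ≠ []) :
    (cyclicPairs l).length = l.length := by
  rw [cyclicPairs_eq l h]
  have := List.length_pos_iff.2 h
  simp only [List.length_append, length_pairs, List.length_singleton]
  omega

lemma pairs_subset_cyclicPairs (l : List α) : pairs l ⊆ cyclicPairs l := by
  cases l with
  | nil => simp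
  | cons a t => exact List.subset_append_left _ _

lemma cyclicPairs_map (f : α → β) (l : List α) :
    cyclicPairs (l.map f) = (cyclicPairs l).map (Prod.map f f) := by
  cases l with
  | nil => rfl
  | cons a t =>
    rw [show (a :: t).map f = f a :: t.map f from rfl]
    rw [cyclicPairs_eq _ (by simp), cyclicPairs_eq (a :: t) (by simp), List.map_append]
    congr 1
    · rw [show (f a :: t.map f) = (a :: t).map f from rfl, pairs_map]
    · have h1 : ((a :: t).map f).getLast (by simp) = f ((a :: t).getLast (by simp)) :=
        List.getLast_map (f := f) (l := a :: t) (by simp)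
      simp only [List.map_cons, List.map_nil, Prod.map_apply]
      exact congrArg (fun z => [(z, f a)]) h1

lemma cyclicPairs_append_comm (A B : List α) :
    cyclicPairs (A ++ B) ~ cyclicPairs (B ++ A) := by
  rcases eq_or_ne A [] with rfl | hA
  · simp
  rcases eq_or_ne B [] with rfl | hB
  · simp
  have hAB : A ++ B ≠ [] := by simp [hA]
  have hBA : B ++ A ≠ [] := by simp [hB]
  rw [cyclicPairs_eq _ hAB, cyclicPairs_eq _ hBA,
    pairs_append A B hA hB, pairs_append B A hB hA]
  have e1 : (A ++ B).getLast hAB = B.getLast hB := by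
    rw [List.getLast_append]; simp [hB]
  have e2 : (A ++ B).head hAB = A.head hA := by
    rw [List.head_append]; simp [hA]
  have e3 : (B ++ A).getLast hBA = A.getLast hA := by
    rw [List.getLast_append]; simp [hA]
  have e4 : (B ++ A).head hBA = B.head hB := by
    rw [List.head_append]; simp [hB]
  rw [e1, e2, e3, e4]
  rw [List.perm_iff_count]
  intro p
  simp only [List.count_append, List.count_cons, List.count_singleton]
  omega

/-- rotate a cyclic list so that a chosen cyclic pair comes first -/
lemma exists_rotation {l : List α} {x y : α} (hlen : 2 ≤ l.length)
    (h : (x, y) ∈ cyclicPairs l) :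
    ∃ t, (x :: y :: t) ~ l ∧ cyclicPairs (x :: y :: t) ~ cyclicPairs l := by
  have hl : l ≠ [] := by rintro rfl; simp at hlen
  rw [cyclicPairs_eq l hl, List.mem_append] at h
  rcases h with h | h
  · obtain ⟨A, B, hAB⟩ := eq_append_of_mem_pairs h
    refine ⟨B ++ A, ?_, ?_⟩
    · rw [hAB]
      calc x :: y :: (B ++ A) ~ (x :: y :: B) ++ A := by simp
        _ ~ A ++ (x :: y :: B) := List.perm_append_comm
    · have : x :: y :: (B ++ A) = (x :: y :: B) ++ A := by simp
      rw [this, hAB]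
      exact cyclicPairs_append_comm _ _
  · simp only [List.mem_singleton, Prod.mk.injEq] at h
    obtain ⟨hx, hy⟩ := h
    -- x is the last, y is the head
    have hdl : l.dropLast ≠ [] := by
      rw [← List.length_pos_iff_ne_nil, List.length_dropLast]; omega
    refine ⟨l.dropLast.tail, ?_, ?_⟩
    · have h1 : x :: l.dropLast = x :: y :: l.dropLast.tail := by
        congr 1
        rw [← List.cons_head_tail hdl]
        congr 1
        rw [List.head_dropLast]; exact hy.symm
      have h2 : l.dropLast ++ [x] = l := by
        rw [hx]; exact List.dropLast_append_getLast hl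
      calc x :: y :: l.dropLast.tail ~ x :: l.dropLast := by rw [h1]
        _ = [x] ++ l.dropLast := rfl
        _ ~ l.dropLast ++ [x] := List.perm_append_comm
        _ = l := h2
    · have h1 : x :: l.dropLast = x :: y :: l.dropLast.tail := by
        congr 1
        rw [← List.cons_head_tail hdl]
        congr 1
        rw [List.head_dropLast]; exact hy.symm
      have h2 : l.dropLast ++ [x] = l := by
        rw [hx]; exact List.dropLast_append_getLast hl
      calc cyclicPairs (x :: y :: l.dropLast.tail)
          = cyclicPairs ([x] ++ l.dropLast) := by rw [← h1]; rfl
        _ ~ cyclicPairs (l.dropLast ++ [x]) := cyclicPairs_append_comm _ _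
        _ = cyclicPairs l := by rw [h2]


section WalkList
open SimpleGraph

variable {X : Type*} [DecidableEq X] {G : SimpleGraph X}

/-- Build a walk from a chain. -/
def ofChain : ∀ (a : X) (l : List X), List.Chain G.Adj a l → G.Walk a ((a :: l).getLast (by simp))
  | _, [], _ => Walk.nil.copy rfl (by simp)
  | a, b :: t, h =>
    (Walk.cons (List.chain_cons.1 h).1 (ofChain b t (List.chain_cons.1 h).2)).copy rfl
      (by exact (List.getLast_cons (by simp)).symm)

@[simp] lemma support_ofChain (a : X) (l : List X) (h : List.Chain G.Adj a l) :
    (ofChain a l h).support = a :: l := by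
  induction l generalizing a with
  | nil => simp [ofChain]
  | cons b t ih => simp [ofChain, ih]; exact ih _ _

lemma isHamiltonianCycle_of_list [Fintype X] {l : List X} (hnd : l.Nodup)
    (hcov : ∀ x, x ∈ l) (hadj : ∀ p ∈ cyclicPairs l, G.Adj p.1 p.2) (hlen : 3 ≤ l.length) :
    ∃ a, ∃ p : G.Walk a a, p.IsHamiltonianCycle := by
  match l, hlen with
  | a :: b :: t, hlen =>
  have ht : t ≠ [] := by rintro rfl; simp at hlen
  have hchain : Chain' G.Adj (a :: b :: t) :=
    chain'_iff_pairs.2 fun p hp => hadj p (pairs_subset_cyclicPairs _ hp)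
  have hab : G.Adj a b := (List.isChain_cons_cons.1 hchain).1
  have hbt : List.Chain G.Adj b t := List.isChain_cons_cons.1 hchain |>.2
  have hclose : G.Adj ((a :: b :: t).getLast (by simp)) a := by
    have := hadj ((a :: b :: t).getLast (by simp), a)
      (by rw [cyclicPairs_eq _ (by simp)]; simp)
    exact this
  have hlast : (a :: b :: t).getLast (by simp) = (b :: t).getLast (by simp) :=
    List.getLast_cons (by simp)
  -- the path from b to a
  let q : G.Walk b a :=
    (ofChain b t hbt).append ((Walk.cons hclose Walk.nil).copy hlast.symm rfl)
  have hsupq : q.support = (b :: t) ++ [a] := by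
    show ((ofChain b t hbt).append _).support = _
    simp only [Walk.support_append, Walk.support_copy, support_ofChain]
    simp
    rfl
  have hanotbt : a ∉ b :: t := by
    intro hmem
    exact (List.nodup_cons.1 hnd).1 hmem
  have hq : q.IsPath := by
    apply Walk.IsPath.mk'
    rw [hsupq]
    refine List.Nodup.append (List.nodup_cons.1 hnd).2 (by simp) ?_
    intro x hx
    simp only [List.mem_singleton]
    rintro rfl
    exact hanotbt hx
  refine ⟨a, Walk.cons hab q, ?_⟩
  rw [Walk.isHamiltonianCycle_iff_isCycle_and_support_count_tail_eq_one]
  constructor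
  · rw [Walk.cons_isCycle_iff]
    refine ⟨hq, ?_⟩
    intro hmem
    show False
    have : q.edges = (ofChain b t hbt).edges ++ [s((a :: b :: t).getLast (by simp), a)] := by
      show ((ofChain b t hbt).append _).edges = _
      simp only [Walk.edges_append, Walk.edges_copy]
      simp
      rfl
    rw [this, List.mem_append] at hmem
    rcases hmem with hmem | hmem
    · have : a ∈ (ofChain b t hbt).support := Walk.fst_mem_support_of_mem_edges _ hmem
      rw [support_ofChain] at this
      exact hanotbt this
    · simp only [List.mem_singleton, Sym2.eq, Sym2.rel_iff', Prod.mk.injEq, Prod.swap_prod_mk] at hmem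
      have hne : a ≠ b := hab.ne
      have hlb : (a :: b :: t).getLast (by simp) = b := by
        rcases hmem with ⟨h1, h2⟩ | ⟨h1, h2⟩
        · exact absurd h2.symm hne
        · exact h2.symm
      -- getLast ∈ t but b ∉ t
      have h1 : (b :: t).getLast (by simp) ∈ t := by
        rw [List.getLast_cons ht]
        exact List.getLast_mem _
      rw [hlast] at hlb
      rw [hlb] at h1
      exact (List.nodup_cons.1 (List.nodup_cons.1 hnd).2).1 h1
  · intro x
    have hsupp : (Walk.cons hab q).support = a :: (b :: t ++ [a]) := by
      rw [Walk.support_cons, hsupq]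
    rw [hsupp]
    show List.count x (b :: t ++ [a]) = 1
    have hperm : (b :: t) ++ [a] ~ a :: b :: t := List.perm_append_comm
    rw [hperm.count_eq]
    exact List.count_eq_one_of_mem hnd (hcov x)

lemma list_of_isHamiltonianCycle [Fintype X] {a : X} {p : G.Walk a a}
    (hp : p.IsHamiltonianCycle) :
    ∃ c : List X, c.Nodup ∧ (∀ x, x ∈ c) ∧ (∀ q ∈ cyclicPairs c, G.Adj q.1 q.2) ∧
      c.length = Fintype.card X := by
  set c := p.support.tail with hc
  have hcount : ∀ x, c.count x = 1 := by
    intro x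
    have := hp.isHamiltonian_tail x
    rwa [Walk.support_tail_of_not_nil p hp.1.not_nil] at this
  have hnd : c.Nodup := List.nodup_iff_count_le_one.2 fun x => (hcount x).le
  have hcov : ∀ x, x ∈ c := fun x => List.count_pos_iff.1 (by rw [hcount x]; norm_num)
  have hcne : c ≠ [] := by
    intro h
    have := hcov a
    rw [h] at this
    simp at this
  have hsup : p.support = a :: c := p.support_eq_cons
  have hchain : Chain' G.Adj (a :: c) := by
    rw [← hsup]; exact Walk.isChain_adj_support p
  refine ⟨c, hnd, hcov, ?_, ?_⟩
  · intro q hq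
    rw [cyclicPairs_eq _ hcne, List.mem_append] at hq
    rcases hq with hq | hq
    · exact chain'_iff_pairs.1 hchain q
        (by rw [pairs_cons a c hcne] at *; exact List.mem_cons_of_mem _ hq)
    · simp only [List.mem_singleton] at hq
      subst hq
      have h1 : c.getLast hcne = a := by
        have h3 : p.support.getLast? = some a := by
          rw [List.getLast?_eq_getLast p.support_ne_nil, p.getLast_support]
        rw [hsup, List.getLast?_eq_getLast (by simp), List.getLast_cons hcne] at h3
        exact Option.some_injective _ h3
      rw [h1]
      have : (a, c.head hcne) ∈ pairs (a :: c) := by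
        rw [pairs_cons a c hcne]; exact List.mem_cons_self
      exact chain'_iff_pairs.1 hchain _ this
  · have h1 : p.support.length = p.length + 1 := p.length_support
    have h2 : p.length = Fintype.card X := hp.length_eq
    have h3 : c.length = p.support.length - 1 := by rw [hsup]; simp
    omega

end WalkList

section Tree
open SimpleGraph
variable {V : Type*} [Fintype V] [DecidableEq V] {T : SimpleGraph V} [DecidableRel T.Adj]

lemma neighbor_of_walk {u v : V} (p : T.Walk u v) (hne : u ≠ v) :
    ∃ w, T.Adj u w ∧ w ∈ p.support.tail := by
  cases p with
  | nil => exact absurd rfl hne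
  | cons h q => exact ⟨_, h, by simp⟩

lemma exists_leaf (hT : T.IsTree) (h2 : 2 ≤ Fintype.card V) :
    ∃ ℓ v₀, T.Adj ℓ v₀ ∧ T.degree ℓ = 1 := by
  have hpos : ∀ v : V, 0 < T.degree v := by
    intro v
    obtain ⟨w, hw⟩ := Fintype.exists_ne_of_one_lt_card (by omega) v
    obtain ⟨p⟩ := hT.isConnected.preconnected v w
    obtain ⟨u, hu, -⟩ := neighbor_of_walk p (Ne.symm hw)
    rw [← SimpleGraph.card_neighborFinset_eq_degree, Finset.card_pos]
    exact ⟨u, by rwa [SimpleGraph.mem_neighborFinset]⟩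
  have hsum : ∑ v : V, T.degree v = 2 * (Fintype.card V - 1) := by
    have h3 := hT.card_edgeFinset
    rw [SimpleGraph.sum_degrees_eq_twice_card_edges]
    omega
  have hex : ∃ ℓ : V, T.degree ℓ = 1 := by
    by_contra hcon
    push_neg at hcon
    have h2le : ∀ v : V, 2 ≤ T.degree v := by
      intro v
      have := hpos v
      have := hcon v
      omega
    have : 2 * Fintype.card V ≤ ∑ v : V, T.degree v := by
      calc 2 * Fintype.card V = ∑ _v : V, 2 := by simp [mul_comm]
        _ ≤ ∑ v : V, T.degree v := Finset.sum_le_sum fun v _ => h2le v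
    omega
  obtain ⟨ℓ, hℓ⟩ := hex
  obtain ⟨v₀, hv₀⟩ := Finset.card_eq_one.1
    (show (T.neighborFinset ℓ).card = 1 by
      rw [SimpleGraph.card_neighborFinset_eq_degree]; exact hℓ)
  refine ⟨ℓ, v₀, ?_, hℓ⟩
  have : v₀ ∈ T.neighborFinset ℓ := by rw [hv₀]; simp
  rwa [SimpleGraph.mem_neighborFinset] at this

lemma adj_eq_of_degree_one {ℓ v₀ w : V} (h1 : T.degree ℓ = 1) (h0 : T.Adj ℓ v₀)
    (hw : T.Adj ℓ w) : w = v₀ := by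
  have hcard : (T.neighborFinset ℓ).card ≤ 1 := by
    rw [SimpleGraph.card_neighborFinset_eq_degree, h1]
  exact Finset.card_le_one.1 hcard w (by rwa [SimpleGraph.mem_neighborFinset])
    v₀ (by rwa [SimpleGraph.mem_neighborFinset])

/-- homomorphism from induced subgraph -/
def induceHomAux (s : Set V) : T.induce s →g T := ⟨Subtype.val, fun h => h⟩

lemma reachable_induce {s : Set V} :
    ∀ {x y : V} (p : T.Walk x y) (hx : x ∈ s) (hy : y ∈ s)
      (_ : ∀ z ∈ p.support, z ∈ s), (T.induce s).Reachable ⟨x, hx⟩ ⟨y, hy⟩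
  | _, _, SimpleGraph.Walk.nil, _, _, _ => Reachable.refl _
  | x, y, @SimpleGraph.Walk.cons _ _ _ b _ hadj q, hx, hy, h => by
    have hb : b ∈ s := h b (by simp)
    have step : (T.induce s).Adj ⟨x, hx⟩ ⟨b, hb⟩ := hadj
    exact step.reachable.trans
      (reachable_induce q hb hy (fun z hz => h z (by simp [hz])))

lemma induce_isTree {ℓ v₀ : V} (hT : T.IsTree) (h0 : T.Adj ℓ v₀) (h1 : T.degree ℓ = 1) :
    (T.induce {x : V | x ≠ ℓ}).IsTree := by
  set s : Set V := {x : V | x ≠ ℓ} with hs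
  constructor
  · -- connected
    rw [SimpleGraph.connected_iff]
    constructor
    · intro x y
      obtain ⟨p⟩ := hT.isConnected.preconnected ↑x ↑y
      let pp := p.toPath
      have hnotin : ∀ z ∈ (pp : T.Walk ↑x ↑y).support, z ∈ s := by
        intro z hz
        simp only [hs, Set.mem_setOf_eq]
        rintro rfl
        -- z = ℓ is in the support of the path, z ≠ x, z ≠ y
        have hℓx : (x : V) ≠ z := x.2
        have hℓy : (y : V) ≠ z := y.2
        set q := (pp : T.Walk ↑x ↑y).takeUntil z hz with hq
        set r := (pp : T.Walk ↑x ↑y).dropUntil z hz with hr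
        have hspec : q.append r = (pp : T.Walk ↑x ↑y) := Walk.take_spec _ hz
        obtain ⟨u, hu, humem⟩ := neighbor_of_walk q.reverse (Ne.symm hℓx)
        obtain ⟨u', hu', hu'mem⟩ := neighbor_of_walk r hℓy.symm
        have huv : u = v₀ := adj_eq_of_degree_one h1 h0 hu
        have hu'v : u' = v₀ := adj_eq_of_degree_one h1 h0 hu'
        have hmem1 : v₀ ∈ q.support := by
          have hm : u ∈ q.reverse.support := List.mem_of_mem_tail humem
          rw [Walk.support_reverse, List.mem_reverse] at hm
          rwa [huv] at hm
        have hmem2 : v₀ ∈ r.support.tail := by rwa [hu'v] at hu'mem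
        have hnd : ((pp : T.Walk ↑x ↑y).support).Nodup := pp.2.support_nodup
        rw [← hspec, Walk.support_append] at hnd
        exact (List.disjoint_of_nodup_append hnd) hmem1 hmem2
      exact reachable_induce (pp : T.Walk ↑x ↑y) x.2 y.2 hnotin
    · exact ⟨⟨v₀, h0.ne'⟩⟩
  · -- acyclic
    intro x c hc
    have := hc.map (f := induceHomAux s) Subtype.val_injective
    exact hT.IsAcyclic _ this

lemma degree_induce {ℓ : V} (u : {x : V // x ≠ ℓ}) :
    haveI : DecidableRel (T.induce {x : V | x ≠ ℓ}).Adj :=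
      fun a b => ‹DecidableRel T.Adj› ↑a ↑b
    (T.induce {x : V | x ≠ ℓ}).degree u =
      (T.neighborFinset ↑u \ {ℓ}).card := by
  haveI : DecidableRel (T.induce {x : V | x ≠ ℓ}).Adj :=
    fun a b => ‹DecidableRel T.Adj› ↑a ↑b
  rw [← SimpleGraph.card_neighborFinset_eq_degree]
  apply Finset.card_bij (fun (a : {x : V // x ≠ ℓ}) _ => (a : V))
  · intro a ha
    rw [SimpleGraph.mem_neighborFinset] at ha
    simp only [Finset.mem_sdiff, SimpleGraph.mem_neighborFinset, Finset.mem_singleton]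
    exact ⟨ha, a.2⟩
  · intro a _ b _ hab
    exact Subtype.ext hab
  · intro b hb
    simp only [Finset.mem_sdiff, SimpleGraph.mem_neighborFinset, Finset.mem_singleton] at hb
    exact ⟨⟨b, hb.2⟩, by rw [SimpleGraph.mem_neighborFinset]; exact hb.1, rfl⟩


end Tree

end BPaux

namespace BPaux
open SimpleGraph

section Surgery
variable {α : Type*} [DecidableEq α]

lemma cp_cons₂ (x y : α) (t : List α) :
    cyclicPairs (x :: y :: t) =
      (x, y) :: (pairs (y :: t) ++ [((y :: t).getLast (by simp), x)]) := by
  rw [cyclicPairs_eq _ (by simp)]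
  rw [show (x :: y :: t).head (by simp) = x from rfl]
  rw [pairs_cons₂, List.getLast_cons (by simp)]
  simp

lemma cp_insert (x y dh dg : α) (t D : List α) (hD : D ≠ [])
    (hdh : D.head? = some dh) (hdg : D.getLast? = some dg) :
    cyclicPairs (x :: (D ++ y :: t)) ~
      (x, dh) :: (dg, y) ::
        (pairs D ++ (pairs (y :: t) ++ [((y :: t).getLast (by simp), x)])) := by
  have hDyt : D ++ y :: t ≠ [] := by simp [hD]
  have hhead : (D ++ y :: t).head hDyt = dh := by
    rw [List.head?_eq_head hD] at hdh
    rw [List.head_append]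
    simp only [List.isEmpty_iff, hD]
    rw [dif_neg (by simp [hD])]
    exact Option.some_injective _ hdh
  have hDg : D.getLast hD = dg := by
    rw [List.getLast?_eq_getLast hD] at hdg
    exact Option.some_injective _ hdg
  rw [cyclicPairs_eq _ (by simp)]
  rw [show (x :: (D ++ y :: t)).head (by simp) = x from rfl]
  rw [pairs_cons _ _ hDyt, hhead]
  have hlast : (x :: (D ++ y :: t)).getLast (by simp) = (y :: t).getLast (by simp) := by
    rw [List.getLast_cons hDyt, List.getLast_append]
    simp
  rw [hlast, pairs_append D (y :: t) hD (by simp), hDg]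
  refine List.Perm.trans ?_ (List.Perm.cons _ List.perm_middle)
  simp only [List.cons_append, List.append_assoc]
  exact List.Perm.refl _

end Surgery

section Detour
variable {W : Type*} [DecidableEq W] {M : SimpleGraph W}

lemma exists_detour {c : List W} (hnd : c.Nodup)
    (hadj : ∀ p ∈ cyclicPairs c, M.Adj p.1 p.2) (hlen : 2 ≤ c.length) {w w' : W}
    (h : (w, w') ∈ cyclicPairs c ∨ (w', w) ∈ cyclicPairs c) :
    ∃ e : List W, e ~ c ∧ e.head? = some w ∧ e.getLast? = some w' ∧
      ∀ p ∈ pairs e, M.Adj p.1 p.2 ∧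
        ((p.1, p.2) ∈ cyclicPairs c ∨ (p.2, p.1) ∈ cyclicPairs c) := by
  rcases h with h | h
  · obtain ⟨t, hperm, hcp⟩ := exists_rotation hlen h
    refine ⟨w :: (w' :: t).reverse, ?_, rfl, ?_, ?_⟩
    · calc w :: (w' :: t).reverse ~ w :: (w' :: t) := List.Perm.cons _ (List.reverse_perm _)
        _ ~ c := hperm
    · rw [List.getLast?_eq_getLast (by simp)]
      congr 1
      rw [List.getLast_cons (by simp), List.getLast_reverse]
      rfl
    · intro p hp
      have heq : w :: (w' :: t).reverse = ((w' :: t) ++ [w]).reverse := by simp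
      rw [heq, pairs_reverse, List.mem_reverse, List.mem_map] at hp
      obtain ⟨q, hq, rfl⟩ := hp
      have hq' : q ∈ cyclicPairs ((w' :: t) ++ [w]) := pairs_subset_cyclicPairs _ hq
      have h1 : cyclicPairs ((w' :: t) ++ [w]) ~ cyclicPairs (w :: w' :: t) := by
        have := cyclicPairs_append_comm (w' :: t) [w]
        simpa using this
      have hq'' : q ∈ cyclicPairs c := (h1.trans hcp).subset hq'
      refine ⟨(hadj q hq'').symm, Or.inr ?_⟩
      simpa using hq''
  · obtain ⟨t, hperm, hcp⟩ := exists_rotation hlen h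
    refine ⟨(w :: t) ++ [w'], ?_, ?_, ?_, ?_⟩
    · calc (w :: t) ++ [w'] ~ [w'] ++ (w :: t) := List.perm_append_comm
        _ = w' :: w :: t := rfl
        _ ~ c := hperm
    · rfl
    · rw [List.getLast?_eq_getLast (by simp)]
      congr 1
      rw [List.getLast_append]
      simp
    · intro p hp
      have hq' : p ∈ cyclicPairs ((w :: t) ++ [w']) := pairs_subset_cyclicPairs _ hp
      have h1 : cyclicPairs ((w :: t) ++ [w']) ~ cyclicPairs (w' :: w :: t) := by
        have := cyclicPairs_append_comm (w :: t) [w']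
        simpa using this
      have hq'' : p ∈ cyclicPairs c := (h1.trans hcp).subset hq'
      exact ⟨hadj p hq'', Or.inl (by simpa using hq'')⟩

end Detour

section Key

variable {W : Type} [Fintype W] [DecidableEq W]

/-- The predicate: a cyclic pair lies within column `v` and its `W`-components form
an edge of the reference Hamiltonian cycle `c` (in either orientation). -/
def colP {V : Type} [DecidableEq V] (c : List W) (v : V) (q : (V × W) × (V × W)) : Bool :=
  decide (q.1.1 = v ∧ q.2.1 = v ∧
    ((q.1.2, q.2.2) ∈ cyclicPairs c ∨ (q.2.2, q.1.2) ∈ cyclicPairs c))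

theorem key (M : SimpleGraph W) (c : List W) (hnd : c.Nodup) (hcov : ∀ x : W, x ∈ c)
    (hadj : ∀ p ∈ cyclicPairs c, M.Adj p.1 p.2) (hn3 : 3 ≤ c.length) :
    ∀ (k : ℕ) (V : Type) [Fintype V] [DecidableEq V] (T : SimpleGraph V)
      [DecidableRel T.Adj],
      Fintype.card V = k → T.IsTree → (∀ v, T.degree v < c.length) →
      ∃ L : List (V × W), L.Nodup ∧ (∀ z : V × W, z ∈ L) ∧
        (∀ p ∈ cyclicPairs L, (T.boxProd M).Adj p.1 p.2) ∧
        ∀ v : V, c.length - T.degree v ≤ List.countP (colP c v) (cyclicPairs L) := by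
  intro k
  induction k using Nat.strongRecOn with
  | ind k IH =>
  intro V _ _ T _ hcard hT hdeg
  have hc_ne : c ≠ [] := by rintro rfl; simp at hn3
  by_cases hVcase : Fintype.card V ≤ 1
  · -- base case : a single vertex
    have h1 : Fintype.card V = 1 :=
      le_antisymm hVcase (Fintype.card_pos_iff.2 hT.isConnected.nonempty)
    obtain ⟨v₀, hall⟩ := Fintype.card_eq_one_iff.1 h1
    refine ⟨c.map (fun w => (v₀, w)), ?_, ?_, ?_, ?_⟩
    · exact hnd.map (fun a b h => congrArg Prod.snd h)
    · intro z
      rw [List.mem_map]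
      exact ⟨z.2, hcov z.2, Prod.ext_iff.2 ⟨(hall z.1).symm, rfl⟩⟩
    · intro p hp
      rw [cyclicPairs_map] at hp
      obtain ⟨q, hq, rfl⟩ := List.mem_map.1 hp
      rw [SimpleGraph.boxProd_adj]
      exact Or.inr ⟨hadj q hq, rfl⟩
    · intro v
      have hsat : List.countP (colP c v) (cyclicPairs (c.map (fun w => (v₀, w)))) =
          (cyclicPairs (c.map (fun w => (v₀, w)))).length := by
        rw [List.countP_eq_length]
        intro q hq
        rw [cyclicPairs_map] at hq
        obtain ⟨r, hr, rfl⟩ := List.mem_map.1 hq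
        simp only [colP, decide_eq_true_eq]
        exact ⟨(hall v).symm, (hall v).symm, Or.inl (by simpa using hr)⟩
      rw [hsat, length_cyclicPairs _ (by simp [hc_ne]), List.length_map]
      exact Nat.sub_le _ _
  · -- inductive step : remove a leaf ℓ with neighbour v₀
    push_neg at hVcase
    obtain ⟨ℓ, v₀, hadjℓ, hdeg1⟩ := exists_leaf hT hVcase
    set s : Set V := {x : V | x ≠ ℓ} with hs
    letI : DecidablePred (· ∈ s) := fun x => show Decidable (x ≠ ℓ) from inferInstance
    letI instDec : DecidableRel (T.induce s).Adj := fun a b => ‹DecidableRel T.Adj› ↑a ↑b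
    have hT' := induce_isTree hT hadjℓ hdeg1
    have hv₀s : v₀ ∈ s := hadjℓ.ne'
    have hcards : Fintype.card ↥s = Fintype.card V - 1 := by
      calc Fintype.card ↥s = Fintype.card {x : V // ¬(x = ℓ)} :=
            Fintype.card_congr (Equiv.subtypeEquivRight fun x => Iff.rfl)
        _ = Fintype.card V - Fintype.card {x : V // x = ℓ} := Fintype.card_subtype_compl _
        _ = Fintype.card V - 1 := by rw [Fintype.card_subtype_eq]
    have hdegv₀ : 1 ≤ T.degree v₀ := by
      have hmem : ℓ ∈ T.neighborFinset v₀ := by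
        rw [SimpleGraph.mem_neighborFinset]; exact hadjℓ.symm
      have := Finset.card_pos.2 ⟨ℓ, hmem⟩
      rwa [SimpleGraph.card_neighborFinset_eq_degree] at this
    have hdegv₀' : (T.induce s).degree ⟨v₀, hv₀s⟩ = T.degree v₀ - 1 := by
      rw [degree_induce]
      have hmem : ℓ ∈ T.neighborFinset v₀ := by
        rw [SimpleGraph.mem_neighborFinset]; exact hadjℓ.symm
      rw [Finset.card_sdiff_of_subset (by simpa using hmem), SimpleGraph.card_neighborFinset_eq_degree]
      simp
    have hdegother : ∀ u : ↥s, (↑u : V) ≠ v₀ → (T.induce s).degree u = T.degree ↑u := by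
      intro u hu
      rw [degree_induce]
      have hnm : ℓ ∉ T.neighborFinset ↑u := by
        rw [SimpleGraph.mem_neighborFinset]
        intro hadj'
        exact hu (adj_eq_of_degree_one hdeg1 hadjℓ hadj'.symm)
      rw [Finset.sdiff_singleton_eq_erase, Finset.erase_eq_of_notMem hnm, SimpleGraph.card_neighborFinset_eq_degree]
    have hdeg' : ∀ u : ↥s, (T.induce s).degree u < c.length := by
      intro u
      by_cases hu : (↑u : V) = v₀
      · have hu' : u = ⟨v₀, hv₀s⟩ := Subtype.ext hu
        rw [hu', hdegv₀']
        have := hdeg v₀; omega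
      · rw [hdegother u hu]; exact hdeg ↑u
    obtain ⟨L', hnd', hcov', hadj', hcount'⟩ :=
      IH (Fintype.card ↥s) (by omega) ↥s (T.induce s) rfl hT' hdeg'
    set ι : ↥s × W → V × W := fun z => (↑z.1, z.2) with hι
    have hι_inj : Function.Injective ι := by
      rintro ⟨a1, a2⟩ ⟨b1, b2⟩ h
      simp only [hι, Prod.mk.injEq] at h
      exact Prod.ext_iff.2 ⟨Subtype.ext h.1, h.2⟩
    set L₀ := L'.map ι with hL₀
    have hndL₀ : L₀.Nodup := hnd'.map hι_inj
    have hcpL₀ : cyclicPairs L₀ = (cyclicPairs L').map (Prod.map ι ι) := cyclicPairs_map ι L'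
    have hadjL₀ : ∀ p ∈ cyclicPairs L₀, (T.boxProd M).Adj p.1 p.2 := by
      intro p hp
      rw [hcpL₀] at hp
      obtain ⟨q, hq, rfl⟩ := List.mem_map.1 hp
      have hq' := hadj' q hq
      rw [SimpleGraph.boxProd_adj] at hq'
      rw [SimpleGraph.boxProd_adj]
      rcases hq' with ⟨h1, h2⟩ | ⟨h1, h2⟩
      · exact Or.inl ⟨h1, h2⟩
      · exact Or.inr ⟨h1, by show (↑q.1.1 : V) = ↑q.2.1; rw [h2]⟩
    have hcountL₀ : ∀ u : ↥s,
        List.countP (colP c (↑u : V)) (cyclicPairs L₀) =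
          List.countP (colP c u) (cyclicPairs L') := by
      intro u
      rw [hcpL₀, List.countP_map]
      have hfun : (colP c (↑u : V) ∘ Prod.map ι ι) = colP c u := by
        funext q
        simp only [Function.comp_apply, colP]
        rw [decide_eq_decide]
        constructor
        · rintro ⟨h1, h2, h3⟩
          exact ⟨Subtype.ext h1, Subtype.ext h2, h3⟩
        · rintro ⟨h1, h2, h3⟩
          exact ⟨congrArg Subtype.val h1, congrArg Subtype.val h2, h3⟩
      rw [hfun]
    have hW3 : 3 ≤ Fintype.card W := by
      have h1 : c.toFinset = Finset.univ :=
        Finset.eq_univ_iff_forall.2 fun x => List.mem_toFinset.2 (hcov x)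
      have h2 : c.length = Fintype.card W := by
        rw [← List.toFinset_card_of_nodup hnd, h1, Finset.card_univ]
      omega
    have hpos : 0 < List.countP (colP c v₀) (cyclicPairs L₀) := by
      rw [hcountL₀ ⟨v₀, hv₀s⟩]
      have h1 := hcount' ⟨v₀, hv₀s⟩
      rw [hdegv₀'] at h1
      have := hdeg v₀
      omega
    obtain ⟨xy, hxy_mem, hxy_pred⟩ := List.countP_pos_iff.1 hpos
    obtain ⟨x, y⟩ := xy
    simp only [colP, decide_eq_true_eq] at hxy_pred
    obtain ⟨hx1, hy1, hcedge⟩ := hxy_pred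
    have hlenL₀ : 2 ≤ L₀.length := by
      have h1 : L'.toFinset = Finset.univ :=
        Finset.eq_univ_iff_forall.2 fun x => List.mem_toFinset.2 (hcov' x)
      have h2 : L'.length = Fintype.card (↥s × W) := by
        rw [← List.toFinset_card_of_nodup hnd', h1, Finset.card_univ]
      have h3 : Fintype.card (↥s × W) = Fintype.card ↥s * Fintype.card W :=
        Fintype.card_prod _ _
      have h4 : 1 ≤ Fintype.card ↥s := Fintype.card_pos_iff.2 ⟨⟨v₀, hv₀s⟩⟩
      have h5 : L₀.length = L'.length := List.length_map _
      nlinarith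
    obtain ⟨t, hpermL₁, hcpL₁⟩ := exists_rotation hlenL₀ hxy_mem
    obtain ⟨e, he_perm, heh, hel, hepairs⟩ :=
      exists_detour hnd hadj (by omega) hcedge
    have he_ne : e ≠ [] := by
      intro h; rw [h] at heh; simp at heh
    set D := e.map (fun z => ((ℓ : V), z)) with hDdef
    have hD_ne : D ≠ [] := by simp [hDdef, he_ne]
    have hDh : D.head? = some (ℓ, x.2) := by
      rw [hDdef, List.head?_map, heh]; rfl
    have hDl : D.getLast? = some (ℓ, y.2) := by
      rw [hDdef, List.getLast?_map, hel]; rfl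
    have hDlen : D.length = c.length := by
      rw [hDdef, List.length_map, he_perm.length_eq]
    have hfstD : ∀ z ∈ D, z.1 = ℓ := by
      intro z hz
      rw [hDdef, List.mem_map] at hz
      obtain ⟨u, _, rfl⟩ := hz
      rfl
    have hfstL₁ : ∀ z ∈ x :: y :: t, z.1 ≠ ℓ := by
      intro z hz
      have hz' : z ∈ L₀ := hpermL₁.subset hz
      rw [hL₀, List.mem_map] at hz'
      obtain ⟨z', _, rfl⟩ := hz'
      exact z'.1.2
    have hpermL₂ : x :: (D ++ y :: t) ~ D ++ (x :: y :: t) := List.perm_middle.symm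
    have hins := cp_insert x y ((ℓ : V), x.2) ((ℓ : V), y.2) t D hD_ne hDh hDl
    have hCPL₁ := cp_cons₂ x y t
    have hndL₁ : (x :: y :: t).Nodup := hpermL₁.nodup_iff.2 hndL₀
    refine ⟨x :: (D ++ y :: t), ?_, ?_, ?_, ?_⟩
    · -- Nodup
      rw [hpermL₂.nodup_iff]
      have hnD : D.Nodup :=
        ((he_perm.nodup_iff).2 hnd).map (fun a b h => congrArg Prod.snd h)
      refine List.Nodup.append hnD hndL₁ ?_
      intro z hzD hzL
      exact hfstL₁ z hzL (hfstD z hzD)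
    · -- covers
      intro z
      rw [hpermL₂.mem_iff, List.mem_append]
      by_cases hz : z.1 = ℓ
      · left
        rw [hDdef, List.mem_map]
        exact ⟨z.2, (he_perm.mem_iff).2 (hcov z.2), Prod.ext_iff.2 ⟨hz.symm, rfl⟩⟩
      · right
        rw [hpermL₁.mem_iff, hL₀, List.mem_map]
        exact ⟨(⟨z.1, hz⟩, z.2), hcov' _, rfl⟩
    · -- adjacency
      intro p hp
      have hp' := (hins.mem_iff).1 hp
      simp only [List.mem_cons, List.mem_append, List.not_mem_nil, or_false] at hp'
      rcases hp' with rfl | rfl | hp' | hp' | rfl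
      · -- (x, (ℓ, x.2))
        rw [SimpleGraph.boxProd_adj]
        exact Or.inl ⟨by rw [hx1]; exact hadjℓ.symm, rfl⟩
      · -- ((ℓ, y.2), y)
        rw [SimpleGraph.boxProd_adj]
        exact Or.inl ⟨by rw [hy1]; exact hadjℓ, rfl⟩
      · -- pairs of the detour column
        rw [hDdef, pairs_map, List.mem_map] at hp'
        obtain ⟨q, hq, rfl⟩ := hp'
        rw [SimpleGraph.boxProd_adj]
        exact Or.inr ⟨(hepairs q hq).1, rfl⟩
      · -- pairs (y :: t)
        have : p ∈ cyclicPairs (x :: y :: t) := by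
          rw [hCPL₁]
          exact List.mem_cons_of_mem _ (List.mem_append_left _ hp')
        exact hadjL₀ p (hcpL₁.subset this)
      · -- the closing pair
        have : ((y :: t).getLast (by simp), x) ∈ cyclicPairs (x :: y :: t) := by
          rw [hCPL₁]
          exact List.mem_cons_of_mem _ (List.mem_append_right _ (by simp))
        exact hadjL₀ _ (hcpL₁.subset this)
    · -- counting
      intro v
      have hcnt₂ := hins.countP_eq (colP c v)
      have hcnt₁ : List.countP (colP c v) (cyclicPairs (x :: y :: t)) =
          List.countP (colP c v) (cyclicPairs L₀) := hcpL₁.countP_eq _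
      rw [hcnt₂]
      rw [List.countP_cons, List.countP_cons, List.countP_append]
      have hR : List.countP (colP c v)
            (pairs (y :: t) ++ [((y :: t).getLast (by simp), x)]) + 
            (if colP c v (x, y) = true then 1 else 0) =
          List.countP (colP c v) (cyclicPairs L₀) := by
        rw [← hcnt₁, hCPL₁, List.countP_cons]
      by_cases hv : v = ℓ
      · -- column ℓ : the detour contributes c.length - 1 pairs
        have hDcnt : List.countP (colP c v) (pairs D) = (pairs D).length := by
          rw [List.countP_eq_length]
          intro q hq
          rw [hDdef, pairs_map, List.mem_map] at hq
          obtain ⟨r, hr, rfl⟩ := hq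
          simp only [colP, decide_eq_true_eq]
          exact ⟨hv.symm, hv.symm, (hepairs r hr).2⟩
        have h6 : (pairs D).length = c.length - 1 := by
          rw [length_pairs, hDlen]
        have h7 : T.degree v = 1 := by rw [hv, hdeg1]
        omega
      · -- other columns
        have hvs : v ∈ s := hv
        have hbase : c.length - (T.induce s).degree (⟨v, hvs⟩ : ↥s) ≤
            List.countP (colP c (⟨v, hvs⟩ : ↥s)) (cyclicPairs L') := hcount' ⟨v, hvs⟩
        have htrans : List.countP (colP c v) (cyclicPairs L₀) =
            List.countP (colP c (⟨v, hvs⟩ : ↥s)) (cyclicPairs L') := hcountL₀ ⟨v, hvs⟩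
        have hite : (if colP c v (x, y) = true then 1 else 0) ≤ 1 := by
          split <;> simp
        by_cases hvv : v = v₀
        · have hu' : (⟨v, hvs⟩ : ↥s) = ⟨v₀, hv₀s⟩ := Subtype.ext hvv
          rw [hu', hdegv₀'] at hbase
          have h8 : T.degree v = T.degree v₀ := by rw [hvv]
          have h9 := hdegv₀
          rw [hu'] at htrans
          omega
        · have h10 : (T.induce s).degree (⟨v, hvs⟩ : ↥s) = T.degree v :=
            hdegother ⟨v, hvs⟩ hvv
          rw [h10] at hbase
          have hite0 : (if colP c v (x, y) = true then 1 else 0) = 0 := by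
            rw [if_neg]
            simp only [colP, decide_eq_true_eq]
            rintro ⟨h1, -, -⟩
            exact hvv (h1.symm.trans hx1)
          omega
end Key
end BPaux

/-- (Batagelj–Pisanski) If `T` is a tree, `M` is a Hamiltonian graph on `n`
vertices, and `Δ(T) < n`, then the Cartesian product `T □ M` is Hamiltonian. -/
theorem boxProd_tree_hamiltonian_isHamiltonian
    (V W : Type) [Fintype V] [Fintype W] [DecidableEq V] [DecidableEq W]
    (T : SimpleGraph V) (M : SimpleGraph W) [DecidableRel T.Adj]
    (hT : T.IsTree) (hM : M.IsHamiltonian)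
    (hdeg : ∀ v : V, T.degree v < Fintype.card W) :
    (T.boxProd M).IsHamiltonian := by
  intro hone
  have hV : Nonempty V := hT.isConnected.nonempty
  rcases Nat.lt_or_ge (Fintype.card W) 3 with hW | hW
  · -- degenerate cases : card W ≤ 2
    have hW0 : Fintype.card W ≠ 0 := by
      intro h0
      obtain ⟨v⟩ := hV
      have := hdeg v
      omega
    have hW2 : Fintype.card W ≠ 2 := by
      intro h2
      obtain ⟨a, p, hp⟩ := hM (by omega)
      have h3 := hp.isCycle.three_le_length
      have h4 := hp.length_eq
      omega
    have hW1 : Fintype.card W = 1 := by omega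
    have hsub : ∀ v w : V, v = w := by
      intro v w
      obtain ⟨p⟩ := hT.isConnected.preconnected v w
      cases p with
      | nil => rfl
      | cons h q =>
        exfalso
        have hd : 0 < T.degree v := by
          rw [← SimpleGraph.card_neighborFinset_eq_degree, Finset.card_pos]
          exact ⟨_, (SimpleGraph.mem_neighborFinset _ _ _).2 h⟩
        have := hdeg v
        omega
    exfalso
    apply hone
    rw [Fintype.card_prod, hW1, mul_one]
    obtain ⟨v⟩ := hV
    exact Fintype.card_eq_one_iff.2 ⟨v, fun y => hsub y v⟩
  · -- main case
    obtain ⟨a, p, hp⟩ := hM (by omega)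
    obtain ⟨c, hnd, hcov, hadjc, hclen⟩ := BPaux.list_of_isHamiltonianCycle hp
    have hn3 : 3 ≤ c.length := by omega
    obtain ⟨L, hndL, hcovL, hadjL, -⟩ :=
      BPaux.key M c hnd hcov hadjc hn3 (Fintype.card V) V T rfl hT
        (fun v => by rw [hclen]; exact hdeg v)
    have hlen : 3 ≤ L.length := by
      have h1 : L.toFinset = Finset.univ :=
        Finset.eq_univ_iff_forall.2 fun x => List.mem_toFinset.2 (hcovL x)
      have h2 : L.length = Fintype.card (V × W) := by
        rw [← List.toFinset_card_of_nodup hndL, h1, Finset.card_univ]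
      have h3 : 1 ≤ Fintype.card V := Fintype.card_pos_iff.2 hV
      have h4 := Nat.le_mul_of_pos_left (Fintype.card W) (by omega : 0 < Fintype.card V)
      rw [h2, Fintype.card_prod]
      omega
    obtain ⟨a', p', hp'⟩ := BPaux.isHamiltonianCycle_of_list hndL hcovL hadjL hlen
    exact ⟨a', p', hp'⟩
end

section
/- Let G be a graph and W a walk (x_1, x_2, ..., x_k) in G that visits every vertex of G and whose set of traversed edges induces a spanning tree of G. Then for any Hamiltonian graph M with more vertices than the maximum degree of that spanning tree, the Cartesian product of the spanning tree with M is a spanning Hamiltonian subgraph of G □ M; in particular G □ M is Hamiltonian. -/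
/-!
Grow a set `s` of vertices of `T` one neighbour at a time, keeping a cycle of `T □ M` through
exactly the fibres `{v} × W`, `v ∈ s`, that uses at most two edges between any two fibres.
If `u ∈ s` is adjacent to `l ∉ s`, the `|W|` vertices over `u` carry `2|W|` ends of cycle edges,
while at most `2 deg u < 2|W|` cycle edges leave the fibre over `u`; so some cycle edge
`(u,i)(u,j)` lies inside it. Replacing that edge by `(u,i)(l,i)`, a Hamiltonian path from `(l,i)`
to `(l,j)` in the fibre over `l`, and `(l,j)(u,j)` absorbs the fibre over `l` and adds only two
edges between fibres. Such a path exists once `M` is cut down to one of its Hamiltonian cycles,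
where every edge closes a Hamiltonian path.
-/

namespace SimpleGraph.Walk

variable {V : Type*} {G : SimpleGraph V} {a x y : V}

lemma mem_support_tail_iff_of_not_nil {c : G.Walk x x} (hc : ¬ c.Nil) :
    y ∈ c.support.tail ↔ y ∈ c.support := by
  rw [c.mem_support_iff, or_iff_right_of_imp]
  rintro rfl
  exact end_mem_tail_support hc

lemma IsCycle.exists_ne_mem_edges {c : G.Walk a a} (hc : c.IsCycle) (hx : x ∈ c.support) :
    ∃ y z, y ≠ z ∧ s(x, y) ∈ c.edges ∧ s(x, z) ∈ c.edges := by
  obtain ⟨y, z, hyz, h⟩ := Set.ncard_eq_two.1 (hc.ncard_neighborSet_toSubgraph_eq_two hx)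
  have hmem : ∀ v, v ∈ c.toSubgraph.neighborSet x → s(x, v) ∈ c.edges :=
    fun v hv => adj_toSubgraph_iff_mem_edges.1 hv
  exact ⟨y, z, hyz, hmem y (by simp [h]), hmem z (by simp [h])⟩

lemma IsCycle.isHamiltonianCycle_of_forall_mem_support [DecidableEq V] {c : G.Walk a a}
    (hc : c.IsCycle) (h : ∀ v, v ∈ c.support) : c.IsHamiltonianCycle :=
  ⟨hc, hc.isPath_tail.isHamiltonian_of_mem fun v => by
    rw [support_tail_of_not_nil _ hc.not_nil, mem_support_tail_iff_of_not_nil hc.not_nil]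
    exact h v⟩

lemma IsCycle.exists_isPath_to_snd {c : G.Walk x x} (hc : c.IsCycle) :
    ∃ p : G.Walk x c.snd, p.IsPath ∧ (∀ v, v ∈ p.support ↔ v ∈ c.support) ∧
      p.edges ⊆ c.edges := by
  refine ⟨c.tail.reverse, hc.isPath_tail.reverse, fun v => ?_, fun e he => ?_⟩
  · rw [support_reverse, List.mem_reverse, support_tail_of_not_nil _ hc.not_nil,
      mem_support_tail_iff_of_not_nil hc.not_nil]
  · rw [edges_reverse, List.mem_reverse, edges_tail] at he
    exact List.mem_of_mem_tail he

lemma IsCycle.exists_isPath_of_mem_edges [DecidableEq V] {c : G.Walk a a} (hc : c.IsCycle)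
    (he : s(x, y) ∈ c.edges) :
    ∃ p : G.Walk x y, p.IsPath ∧ (∀ v, v ∈ p.support ↔ v ∈ c.support) ∧
      p.edges ⊆ c.edges := by
  have hx := c.fst_mem_support_of_mem_edges he
  set c' := c.rotate x hx
  have hc' : c'.IsCycle := hc.rotate hx
  suffices ∃ p : G.Walk x y, p.IsPath ∧ (∀ v, v ∈ p.support ↔ v ∈ c'.support) ∧
      p.edges ⊆ c'.edges by
    obtain ⟨p, hp, hsupp, hedges⟩ := this
    exact ⟨p, hp, fun v => (hsupp v).trans (mem_support_rotate_iff c x hx),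
      List.Subset.trans hedges (rotate_edges c x hx).perm.subset⟩
  have hy : y ∈ c'.toSubgraph.neighborSet x :=
    adj_toSubgraph_iff_mem_edges.2 ((rotate_edges c x hx).mem_iff.2 he)
  rw [hc'.neighborSet_toSubgraph_endpoint, Set.mem_insert_iff, Set.mem_singleton_iff,
    ← snd_reverse] at hy
  rcases hy with rfl | rfl
  · exact hc'.exists_isPath_to_snd
  · obtain ⟨p, hp, hsupp, hedges⟩ := hc'.reverse.exists_isPath_to_snd
    refine ⟨p, hp, fun v => by rw [hsupp, support_reverse, List.mem_reverse], ?_⟩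
    exact List.Subset.trans hedges (by rw [edges_reverse]; exact fun e => List.mem_reverse.1)

lemma IsPath.isCycle_cons_append_cons {b c d : V} {p : G.Walk b c} {q : G.Walk d a}
    (hp : p.IsPath) (hq : q.IsPath) (hab : G.Adj a b) (hcd : G.Adj c d)
    (hpq : p.support.Disjoint q.support) (hbc : b ≠ c) :
    ((cons hab p).append (cons hcd q)).IsCycle := by
  refine IsPath.isCycle_append ((cons_isPath_iff _ _).2 ⟨hp, fun h => hpq h q.end_mem_support⟩)
    ((cons_isPath_iff _ _).2 ⟨hq, fun h => hpq p.end_mem_support h⟩) (by simpa using hpq)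
    (Or.inl ?_)
  simpa using not_nil_iff_lt_length.1 (not_nil_of_ne hbc)

end SimpleGraph.Walk

namespace SimpleGraph

open Finset Walk

variable {V W : Type*}

lemma boxProd_mono {G G' : SimpleGraph V} {H H' : SimpleGraph W} (hG : G ≤ G') (hH : H ≤ H') :
    (G □ H) ≤ (G' □ H') := by
  intro p q h
  rw [boxProd_adj] at h ⊢
  exact h.imp (And.imp_left (@hG _ _)) (And.imp_left (@hH _ _))

lemma Connected.exists_adj_mem_notMem {G : SimpleGraph V} (hG : G.Connected) {s : Set V}
    {u l : V} (hu : u ∈ s) (hl : l ∉ s) : ∃ x ∈ s, ∃ y ∉ s, G.Adj x y := by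
  obtain ⟨p⟩ := hG u l
  obtain ⟨d, -, hd₁, hd₂⟩ := p.exists_boundary_dart s hu hl
  exact ⟨d.fst, hd₁, d.snd, hd₂, d.adj⟩

lemma Walk.IsHamiltonianCycle.exists_le_forall_adj_exists_isHamiltonian [Fintype W]
    [DecidableEq W] {M : SimpleGraph W} {w : W} {C : M.Walk w w} (hC : C.IsHamiltonianCycle) :
    ∃ M' ≤ M, (∃ C' : M'.Walk w w, C'.IsHamiltonianCycle) ∧
      ∀ i j, M'.Adj i j → ∃ Q : M'.Walk i j, Q.IsHamiltonian := by
  set M' := fromEdgeSet {e | e ∈ C.edges}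
  have hedges : ∀ e ∈ C.edges, e ∈ M'.edgeSet := fun e he => by
    rw [edgeSet_fromEdgeSet]
    exact ⟨he, M.not_isDiag_of_mem_edgeSet (C.edges_subset_edgeSet he)⟩
  set C' := C.transfer M' hedges
  have hC' : C'.IsHamiltonianCycle :=
    (hC.isCycle.transfer hedges).isHamiltonianCycle_of_forall_mem_support fun v => by
      simpa [C', support_transfer] using hC.mem_support v
  refine ⟨M', fun i j h => C.adj_of_mem_edges h.1, ⟨C', hC'⟩, fun i j hij => ?_⟩
  have he : s(i, j) ∈ C'.edges := by simpa [C', edges_transfer] using hij.1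
  obtain ⟨Q, hQ, hQsupp, -⟩ := hC'.isCycle.exists_isPath_of_mem_edges he
  exact ⟨Q, hQ.isHamiltonian_of_mem fun v => (hQsupp v).2 (hC'.mem_support v)⟩

lemma Walk.mem_support_boxProdRight_iff {T : SimpleGraph V} {M : SimpleGraph W} {i j : W}
    {Q : M.Walk i j} {v : V} {q : V × W} :
    q ∈ (Q.boxProdRight T v).support ↔ q.1 = v ∧ q.2 ∈ Q.support := by
  change q ∈ (Q.map (boxProdRight T M v).toHom).support ↔ _
  rw [Walk.support_map, List.mem_map]
  exact ⟨by rintro ⟨t, ht, rfl⟩; exact ⟨rfl, ht⟩, fun h => ⟨q.2, h.2, by ext <;> simp [h.1]⟩⟩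

variable [Fintype W] [DecidableEq V] [DecidableEq W] {T : SimpleGraph V} {M : SimpleGraph W}

def Walk.crossings {a b : V × W} (p : (T □ M).Walk a b) (x y : V) : Finset W :=
  {t | s((x, t), (y, t)) ∈ p.edges}

@[simp] lemma Walk.mem_crossings {a b : V × W} {p : (T □ M).Walk a b} {x y : V} {t : W} :
    t ∈ p.crossings x y ↔ s((x, t), (y, t)) ∈ p.edges := by
  simp [crossings]

lemma Walk.adj_of_mem_crossings {a b : V × W} {p : (T □ M).Walk a b} {x y : V} {t : W}
    (h : t ∈ p.crossings x y) : T.Adj x y :=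
  boxProd_adj_left.1 (p.adj_of_mem_edges (mem_crossings.1 h))

structure IsFibreCycle (s : Finset V) {a : V × W} (c : (T □ M).Walk a a) : Prop where
  isCycle : c.IsCycle
  mem_support_iff : ∀ q, q ∈ c.support ↔ q.1 ∈ s
  card_crossings_le : ∀ x y, #(c.crossings x y) ≤ 2

lemma isFibreCycle_boxProdRight {w : W} {C : M.Walk w w} (hC : C.IsHamiltonianCycle) (v : V) :
    IsFibreCycle {v} (C.boxProdRight T v) where
  isCycle := hC.isCycle.map (boxProdRight T M v).injective
  mem_support_iff q := by simp [mem_support_boxProdRight_iff, hC.mem_support]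
  card_crossings_le x y := by
    suffices (C.boxProdRight T v).crossings x y = ∅ by simp [this]
    refine eq_empty_of_forall_notMem fun t ht => (adj_of_mem_crossings ht).ne ?_
    rw [mem_crossings] at ht
    exact (mem_support_boxProdRight_iff.1 (fst_mem_support_of_mem_edges _ ht)).1.trans
      (mem_support_boxProdRight_iff.1 (snd_mem_support_of_mem_edges _ ht)).1.symm

lemma IsFibreCycle.exists_mem_edges [Fintype V] {s : Finset V} {a : V × W}
    {c : (T □ M).Walk a a} (hc : IsFibreCycle s c) {u : V} (hu : u ∈ s)
    (hdeg : (T.neighborSet u).ncard < Fintype.card W) : ∃ i j, s((u, i), (u, j)) ∈ c.edges := by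
  classical
  by_contra! hvert
  set N := T.neighborFinset u
  let r : V → W → Prop := fun y t => s((u, t), (y, t)) ∈ c.edges
  have hbelow : ∀ t, 2 ≤ #(N.bipartiteBelow r t) := by
    intro t
    have horiz : ∀ q, s((u, t), q) ∈ c.edges → q = (q.1, t) ∧ q.1 ∈ N.bipartiteBelow r t := by
      intro q hq
      rcases boxProd_adj.1 (c.adj_of_mem_edges hq) with ⟨hadj, ht⟩ | ⟨-, hq1⟩
      · obtain ⟨q1, q2⟩ := q
        simp only at ht
        subst ht
        exact ⟨rfl, mem_filter.2 ⟨by simpa [N] using hadj, hq⟩⟩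
      · obtain ⟨q1, q2⟩ := q
        simp only at hq1
        subst hq1
        exact absurd hq (hvert t q2)
    obtain ⟨q, q', hqq', hq, hq'⟩ :=
      hc.isCycle.exists_ne_mem_edges ((hc.mem_support_iff (u, t)).2 hu)
    obtain ⟨hq1, hmem⟩ := horiz q hq
    obtain ⟨hq1', hmem'⟩ := horiz q' hq'
    exact one_lt_card.2 ⟨q.1, hmem, q'.1, hmem', fun h => hqq' (by rw [hq1, hq1', h])⟩
  have : 2 * Fintype.card W ≤ 2 * (T.neighborSet u).ncard := calc
    2 * Fintype.card W = ∑ _t : W, 2 := by simp [mul_comm]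
    _ ≤ ∑ t, #(N.bipartiteBelow r t) := sum_le_sum fun t _ => hbelow t
    _ = ∑ y ∈ N, #(c.crossings u y) :=
      (sum_card_bipartiteAbove_eq_sum_card_bipartiteBelow _).symm
    _ ≤ ∑ _y ∈ N, 2 := sum_le_sum fun y _ => hc.card_crossings_le u y
    _ = 2 * (T.neighborSet u).ncard := by
      rw [sum_const, smul_eq_mul, mul_comm, Set.ncard_eq_toFinset_card']
      rfl
  omega

lemma Walk.mem_crossings_cons_append_cons {u l : V} {i j : W}
    (hin : (T □ M).Adj (u, i) (l, i)) (Q : M.Walk i j) (hout : (T □ M).Adj (l, j) (u, j))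
    (P : (T □ M).Walk (u, j) (u, i)) {x y : V} {t : W}
    (ht : t ∈ ((cons hin (Q.boxProdRight T l)).append (cons hout P)).crossings x y) :
    ((x = l ∨ y = l) ∧ (t = i ∨ t = j)) ∨ t ∈ P.crossings x y := by
  have hxy := (adj_of_mem_crossings ht).ne
  rw [mem_crossings, edges_append, edges_cons, edges_cons] at ht
  simp only [List.mem_append, List.mem_cons] at ht
  rcases ht with (h | h) | h | h
  · simp only [Sym2.eq_iff, Prod.mk.injEq] at h
    grind
  · exact absurd ((mem_support_boxProdRight_iff.1 (fst_mem_support_of_mem_edges _ h)).1.trans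
      (mem_support_boxProdRight_iff.1 (snd_mem_support_of_mem_edges _ h)).1.symm) hxy
  · simp only [Sym2.eq_iff, Prod.mk.injEq] at h
    grind
  · exact Or.inr (mem_crossings.2 h)

lemma IsFibreCycle.splice {s : Finset V} {a : V × W} {c : (T □ M).Walk a a}
    (hc : IsFibreCycle s c) {u l : V} (hl : l ∉ s) (hul : T.Adj u l) {i j : W}
    (hij : s((u, i), (u, j)) ∈ c.edges) {Q : M.Walk i j} (hQ : Q.IsHamiltonian) :
    ∃ b, ∃ c' : (T □ M).Walk b b, IsFibreCycle (insert l s) c' := by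
  obtain ⟨P, hP, hPsupp, hPedges⟩ := hc.isCycle.exists_isPath_of_mem_edges (Sym2.eq_swap ▸ hij)
  replace hPsupp : ∀ q, q ∈ P.support ↔ q.1 ∈ s :=
    fun q => (hPsupp q).trans (hc.mem_support_iff q)
  have hQsupp : ∀ q, q ∈ (Q.boxProdRight T l).support ↔ q.1 = l := by
    simp [mem_support_boxProdRight_iff, hQ.mem_support]
  have hin : (T □ M).Adj (u, i) (l, i) := boxProd_adj_left.2 hul
  have hout : (T □ M).Adj (l, j) (u, j) := boxProd_adj_left.2 hul.symm
  refine ⟨(u, i), (cons hin (Q.boxProdRight T l)).append (cons hout P), ⟨?_, fun q => ?_, ?_⟩⟩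
  · refine (hQ.isPath.map (boxProdRight T M l).injective).isCycle_cons_append_cons hP hin hout
      (fun q hq hq' => hl ((hQsupp q).1 hq ▸ (hPsupp q).1 hq')) ?_
    simpa using (c.adj_of_mem_edges hij).ne
  · have hu : u ∈ s := (hPsupp (u, i)).1 P.end_mem_support
    simp only [support_append, support_cons, List.tail_cons, List.mem_cons, List.mem_append,
      hQsupp, hPsupp, mem_insert]
    grind
  · intro x y
    by_cases hxy : x = l ∨ y = l
    · calc _ ≤ #{i, j} := card_le_card fun t ht => by
            rcases mem_crossings_cons_append_cons hin Q hout P ht with ⟨-, rfl | rfl⟩ | ht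
            · simp
            · simp
            · have he := mem_crossings.1 ht
              have hx := (hPsupp _).1 (P.fst_mem_support_of_mem_edges he)
              have hy := (hPsupp _).1 (P.snd_mem_support_of_mem_edges he)
              rcases hxy with rfl | rfl <;> contradiction
        _ ≤ 2 := card_le_two
    · refine (card_le_card fun t ht => ?_).trans (hc.card_crossings_le x y)
      rcases mem_crossings_cons_append_cons hin Q hout P ht with ⟨h, -⟩ | ht
      · exact absurd h hxy
      · exact mem_crossings.2 (hPedges (mem_crossings.1 ht))

lemma exists_isFibreCycle [Fintype V] (hT : T.Connected) {w : W} {C : M.Walk w w}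
    (hC : C.IsHamiltonianCycle) (hM : ∀ i j, M.Adj i j → ∃ Q : M.Walk i j, Q.IsHamiltonian)
    (hdeg : ∀ v, (T.neighborSet v).ncard < Fintype.card W) :
    ∀ n < Fintype.card V, ∃ s : Finset V, #s = n + 1 ∧
      ∃ a, ∃ c : (T □ M).Walk a a, IsFibreCycle s c
  | 0, _ => by
    obtain ⟨v⟩ := hT.nonempty
    exact ⟨{v}, rfl, _, C.boxProdRight T v, isFibreCycle_boxProdRight hC v⟩
  | n + 1, hn => by
    obtain ⟨s, hs, a, c, hc⟩ := exists_isFibreCycle hT hC hM hdeg n (by omega)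
    obtain ⟨v, hv⟩ : s.Nonempty := card_pos.1 (by omega)
    obtain ⟨l', -, hl'⟩ := exists_mem_notMem_of_card_lt_card (s := s) (t := univ)
      (by rw [card_univ]; omega)
    obtain ⟨u, hu, l, hl, hul⟩ := hT.exists_adj_mem_notMem (s := s) hv hl'
    obtain ⟨i, j, hij⟩ := hc.exists_mem_edges hu (hdeg u)
    obtain ⟨Q, hQ⟩ := hM i j (boxProd_adj_right.1 (c.adj_of_mem_edges hij))
    obtain ⟨b, c', hc'⟩ := hc.splice hl hul hij hQ
    exact ⟨insert l s, by rw [card_insert_of_notMem hl, hs], b, c', hc'⟩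

theorem Connected.isHamiltonian_boxProd [Fintype V] (hT : T.Connected) (hM : M.IsHamiltonian)
    (hdeg : ∀ v, (T.neighborSet v).ncard < Fintype.card W) : (T □ M).IsHamiltonian := by
  intro hVW
  have hV := Fintype.card_pos_iff.2 hT.nonempty
  have hW : Fintype.card W ≠ 1 := by
    intro hW
    have : Subsingleton V := by
      by_contra hnt
      rw [not_subsingleton_iff_nontrivial] at hnt
      obtain ⟨v⟩ := hT.nonempty
      obtain ⟨u, hu⟩ := hT.preconnected.exists_adj_of_nontrivial v
      have hv := hdeg v
      rw [hW, Nat.lt_one_iff, Set.ncard_eq_zero] at hv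
      exact hv.subset hu
    have := Fintype.card_le_one_iff_subsingleton.2 this
    exact hVW (by rw [Fintype.card_prod, hW]; omega)
  obtain ⟨w, C, hC⟩ := hM hW
  obtain ⟨M', hM'M, ⟨C', hC'⟩, hM'⟩ := hC.exists_le_forall_adj_exists_isHamiltonian
  obtain ⟨s, hs, a, c, hc⟩ :=
    exists_isFibreCycle hT hC' hM' hdeg (Fintype.card V - 1) (by omega)
  have hs : s = univ := eq_univ_of_card s (by omega)
  have hham : (T □ M').IsHamiltonian := fun _ =>
    ⟨a, c, hc.isCycle.isHamiltonianCycle_of_forall_mem_support fun q =>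
      (hc.mem_support_iff q).2 (hs ▸ mem_univ _)⟩
  exact hham.mono (boxProd_mono le_rfl hM'M) hVW

end SimpleGraph

theorem boxProd_hamiltonian_of_spanning_tree_walk_general
    (V W : Type) [Fintype V] [Fintype W] [DecidableEq V] [DecidableEq W]
    (G : SimpleGraph V) (M : SimpleGraph W) (x y : V) (w : G.Walk x y)
    (T : SimpleGraph V) (hTdef : T = SimpleGraph.fromEdgeSet {e | e ∈ w.edges})
    (htree : T.IsTree) (hM : M.IsHamiltonian)
    (hdeg : ∀ v : V, (T.neighborSet v).ncard < Fintype.card W) :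
    (T.boxProd M).IsHamiltonian ∧
    T.boxProd M ≤ G.boxProd M ∧
    (G.boxProd M).IsHamiltonian := by
  have hTG : T ≤ G := by
    rw [hTdef, SimpleGraph.fromEdgeSet_le]
    exact fun e he => w.edges_subset_edgeSet he.1
  have hTMG := SimpleGraph.boxProd_mono hTG (le_refl M)
  have hham := htree.connected.isHamiltonian_boxProd hM hdeg
  exact ⟨hham, hTMG, hham.mono hTMG⟩

/-- If a walk `w` in `G` visits every vertex and its traversed edges induce a
spanning tree `T` of `G`, then for every Hamiltonian graph `M` with more
vertices than the maximum degree of `T`, the product `T □ M` is a Hamiltonian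
spanning subgraph of `G □ M`; in particular `G □ M` is Hamiltonian. -/
theorem boxProd_hamiltonian_of_spanning_tree_walk
    (V W : Type) [Fintype V] [Fintype W] [DecidableEq V] [DecidableEq W]
    (G : SimpleGraph V) (M : SimpleGraph W) (x y : V) (w : G.Walk x y)
    (hspan : ∀ v : V, v ∈ w.support)
    (T : SimpleGraph V) (hTdef : T = SimpleGraph.fromEdgeSet {e | e ∈ w.edges})
    (htree : T.IsTree) (hM : M.IsHamiltonian)
    (hdeg : ∀ v : V, (T.neighborSet v).ncard < Fintype.card W) :
    (T.boxProd M).IsHamiltonian ∧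
    T.boxProd M ≤ G.boxProd M ∧
    (G.boxProd M).IsHamiltonian :=
  boxProd_hamiltonian_of_spanning_tree_walk_general V W G M x y w T hTdef htree hM hdeg
end
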